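/- Continuity of the maximum causal effect: let N and N' be quantum channels from a d_A-dimensional system A (with d_A ≥ 2) to a d_B-dimensional system B. If ‖N(ρ) − N'(ρ)‖₁ ≤ ε for every density matrix ρ on A, then |CE_max(N) − CE_max(N')| ≤ ε. -/

import Mathlib

open Matrix ComplexOrder

/-- Trace norm of a square complex matrix. -/
noncomputable def traceNorm {n : Type*} [Fintype n] [DecidableEq n]
    (X : Matrix n n ℂ) : ℝ :=
  (((Matrix.posSemidef_conjTranspose_mul_self X).1.eigenvectorUnitary.1 *
      diagonal (((↑) : ℝ → ℂ) ∘ (√·) ∘ (Matrix.posSemidef_conjTranspose_mul_self X).1.eigenvalues) *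
      (star (Matrix.posSemidef_conjTranspose_mul_self X).1.eigenvectorUnitary :
        Matrix n n ℂ)).trace).re

/-- A density matrix: positive semidefinite with unit trace. -/
def IsDensityMatrix {n : Type*} [Fintype n] [DecidableEq n] (ρ : Matrix n n ℂ) : Prop :=
  ρ.PosSemidef ∧ ρ.trace = 1

/-- A quantum channel: a linear map admitting a Kraus representation. -/
def IsQuantumChannel {dA dB : ℕ}
    (N : Matrix (Fin dA) (Fin dA) ℂ →ₗ[ℂ] Matrix (Fin dB) (Fin dB) ℂ) : Prop :=
  ∃ (k : ℕ) (K : Fin k → Matrix (Fin dB) (Fin dA) ℂ),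
    (∀ X, N X = ∑ i, K i * X * (K i)ᴴ) ∧ (∑ i, (K i)ᴴ * K i = 1)

/-- Maximum causal effect. -/
noncomputable def CEmax {dA dB : ℕ}
    (N : Matrix (Fin dA) (Fin dA) ℂ →ₗ[ℂ] Matrix (Fin dB) (Fin dB) ℂ) : ℝ :=
  sSup {x : ℝ | ∃ ρ ρ' : Matrix (Fin dA) (Fin dA) ℂ,
    IsDensityMatrix ρ ∧ IsDensityMatrix ρ' ∧ ρ ≠ ρ' ∧
    x = traceNorm (N ρ - N ρ') / traceNorm (ρ - ρ')}

/-- Minimum causal effect. -/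
noncomputable def CEmin {dA dB : ℕ}
    (N : Matrix (Fin dA) (Fin dA) ℂ →ₗ[ℂ] Matrix (Fin dB) (Fin dB) ℂ) : ℝ :=
  sInf {x : ℝ | ∃ ρ ρ' : Matrix (Fin dA) (Fin dA) ℂ,
    IsDensityMatrix ρ ∧ IsDensityMatrix ρ' ∧ ρ ≠ ρ' ∧
    x = traceNorm (N ρ - N ρ') / traceNorm (ρ - ρ')}

/-- Minimum distinguishability preservation. -/
noncomputable def DPmin {dA dB : ℕ}
    (N : Matrix (Fin dA) (Fin dA) ℂ →ₗ[ℂ] Matrix (Fin dB) (Fin dB) ℂ) : ℝ :=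
  sInf {x : ℝ | ∃ p : ℝ, 0 ≤ p ∧ p ≤ 1 ∧
    ∃ ρ ρ' : Matrix (Fin dA) (Fin dA) ℂ,
      IsDensityMatrix ρ ∧ IsDensityMatrix ρ' ∧ ρ ≠ ρ' ∧
      x = traceNorm ((p : ℂ) • N ρ - ((1 - p : ℝ) : ℂ) • N ρ') /
          traceNorm ((p : ℂ) • ρ - ((1 - p : ℝ) : ℂ) • ρ')}

/-!
Every difference of states `ρ - ρ'` is a positive multiple of a difference `σ - σ'` of states
with `‖σ - σ'‖₁ = 2` (Jordan decomposition of `ρ - ρ'`), and the ratio defining `CEmax` is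
unchanged by this rescaling. For such a pair the triangle inequality for the trace norm of
Hermitian matrices gives `‖N σ - N σ'‖₁ ≤ ‖N' σ - N' σ'‖₁ + 2 ε`, so every ratio of `N` is at
most `CEmax N' + ε`; exchanging `N` and `N'` gives the other inequality.
-/

open scoped MatrixOrder

section TraceNorm

variable {n : Type*} [Fintype n] [DecidableEq n]

lemma traceNorm_eq_re_trace_abs (X : Matrix n n ℂ) : traceNorm X = (CFC.abs X).trace.re := by
  rw [CFC.abs, star_eq_conjTranspose, CFC.sqrt_eq_cfc,
    cfc_nnreal_eq_real _ _ (posSemidef_conjTranspose_mul_self X).nonneg,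
    (posSemidef_conjTranspose_mul_self X).1.cfc_eq, traceNorm]
  simp only [IsHermitian.cfc, Unitary.conjStarAlgAut_apply]
  congr
  funext x
  simp only [Real.coe_sqrt, Real.coe_toNNReal']
  rcases le_total 0 x with h | h
  · rw [max_eq_left h]
  · rw [max_eq_right h, Real.sqrt_zero, Real.sqrt_eq_zero'.mpr h]

lemma traceNorm_nonneg (X : Matrix n n ℂ) : 0 ≤ traceNorm X := by
  rw [traceNorm_eq_re_trace_abs]
  exact (Complex.nonneg_iff.mp (CFC.abs_nonneg X).posSemidef.trace_nonneg).1

lemma traceNorm_neg (X : Matrix n n ℂ) : traceNorm (-X) = traceNorm X := by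
  rw [traceNorm_eq_re_trace_abs, traceNorm_eq_re_trace_abs, CFC.abs_neg]

lemma traceNorm_sub_comm (X Y : Matrix n n ℂ) : traceNorm (X - Y) = traceNorm (Y - X) := by
  rw [← traceNorm_neg, neg_sub]

lemma traceNorm_smul (r : ℝ) (X : Matrix n n ℂ) : traceNorm (r • X) = |r| * traceNorm X := by
  rw [traceNorm_eq_re_trace_abs, traceNorm_eq_re_trace_abs, CFC.abs_smul, trace_smul,
    Real.norm_eq_abs, Complex.real_smul, Complex.re_ofReal_mul]

lemma Matrix.PosSemidef.traceNorm_eq {A : Matrix n n ℂ} (hA : A.PosSemidef) :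
    traceNorm A = A.trace.re := by
  rw [traceNorm_eq_re_trace_abs, CFC.abs_of_nonneg A hA.nonneg]

lemma IsSelfAdjoint.traceNorm_eq {X : Matrix n n ℂ} (hX : IsSelfAdjoint X) :
    traceNorm X = (X⁺.trace + X⁻.trace).re := by
  rw [traceNorm_eq_re_trace_abs, ← CFC.posPart_add_negPart X hX, trace_add]

lemma Matrix.trace_mul_nonneg {A B : Matrix n n ℂ} (hA : 0 ≤ A) (hB : 0 ≤ B) :
    0 ≤ (A * B).trace := by
  obtain ⟨s, hs, rfl⟩ : ∃ s : Matrix n n ℂ, IsSelfAdjoint s ∧ A = s * s :=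
    ⟨CFC.sqrt A, (CFC.sqrt_nonneg A).isSelfAdjoint, (CFC.sqrt_mul_sqrt_self A).symm⟩
  rw [Matrix.mul_assoc, trace_mul_comm, Matrix.mul_assoc]
  have := (nonneg_iff_posSemidef.mp hB).mul_mul_conjTranspose_same s
  rw [← star_eq_conjTranspose, hs.star_eq, Matrix.mul_assoc] at this
  exact this.trace_nonneg

/-- The spectral projection `p` of `Z` onto its positive part satisfies `p Z = Z⁺` and
`0 ≤ p ≤ 1`, so `tr Z⁺ = tr (p Z) ≤ tr (p A) ≤ tr A`. -/
lemma Matrix.trace_posPart_le {Z A : Matrix n n ℂ} (hA : 0 ≤ A) (hZA : Z ≤ A) :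
    Z⁺.trace ≤ A.trace := by
  have hZ : IsSelfAdjoint Z := by
    simpa using hA.isSelfAdjoint.sub (sub_nonneg.mpr hZA).isSelfAdjoint
  have hcont (f : ℝ → ℝ) : ContinuousOn f (spectrum ℝ Z) :=
    Z.finite_real_spectrum.continuousOn f
  set p := cfc (fun x : ℝ => if 0 < x then (1 : ℝ) else 0) Z
  have hpZ : p * Z = Z⁺ := by
    conv_lhs => rw [← cfc_id' ℝ Z]
    rw [← cfc_mul _ _ _ (hcont _) (hcont _), CFC.posPart_def, cfcₙ_eq_cfc]
    refine cfc_congr fun x _ => ?_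
    split_ifs with h
    · simp [h.le]
    · simp [posPart_eq_zero.mpr (not_lt.mp h)]
  have hp : 0 ≤ p := cfc_nonneg fun x _ => by split_ifs <;> norm_num
  have hp1 : 0 ≤ 1 - p := by
    rw [← cfc_one ℝ Z, ← cfc_sub _ _ _ (hcont _) (hcont _)]
    exact cfc_nonneg fun x _ => by simp only [Pi.one_apply]; split_ifs <;> norm_num
  calc Z⁺.trace = (p * Z).trace := by rw [hpZ]
    _ ≤ (p * A).trace := by
      rw [← sub_nonneg, ← trace_sub, ← Matrix.mul_sub]
      exact trace_mul_nonneg hp (sub_nonneg.mpr hZA)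
    _ ≤ A.trace := by
      rw [← sub_nonneg, ← trace_sub]
      simpa [Matrix.sub_mul] using trace_mul_nonneg hp1 hA

/-- `X + Y = (X⁺ + Y⁺) - (X⁻ + Y⁻)` is a difference of positive matrices, whose traces bound
those of the positive and negative parts of `X + Y`. -/
lemma traceNorm_add_le {X Y : Matrix n n ℂ} (hX : IsSelfAdjoint X) (hY : IsSelfAdjoint Y) :
    traceNorm (X + Y) ≤ traceNorm X + traceNorm Y := by
  have hpos : (X + Y)⁺.trace ≤ (X⁺ + Y⁺).trace :=
    trace_posPart_le (add_nonneg (CFC.posPart_nonneg X) (CFC.posPart_nonneg Y))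
      (add_le_add (CFC.le_posPart hX) (CFC.le_posPart hY))
  have hneg : (X + Y)⁻.trace ≤ (X⁻ + Y⁻).trace := by
    rw [← CFC.posPart_neg]
    refine trace_posPart_le (add_nonneg (CFC.negPart_nonneg X) (CFC.negPart_nonneg Y)) ?_
    rw [neg_add]
    exact add_le_add (neg_le.mp (CFC.neg_negPart_le hX)) (neg_le.mp (CFC.neg_negPart_le hY))
  rw [(hX.add hY).traceNorm_eq, hX.traceNorm_eq, hY.traceNorm_eq, ← Complex.add_re]
  refine (Complex.le_def.mp (add_le_add hpos hneg)).1.trans_eq ?_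
  rw [trace_add, trace_add, add_add_add_comm]

lemma traceNorm_sub_le {X Y Z : Matrix n n ℂ} (hX : IsSelfAdjoint X) (hY : IsSelfAdjoint Y)
    (hZ : IsSelfAdjoint Z) : traceNorm (X - Z) ≤ traceNorm (X - Y) + traceNorm (Y - Z) := by
  simpa using traceNorm_add_le (hX.sub hY) (hY.sub hZ)

end TraceNorm

section DensityMatrix

variable {n : Type*} [Fintype n] [DecidableEq n]

lemma IsDensityMatrix.isSelfAdjoint {ρ : Matrix n n ℂ} (hρ : IsDensityMatrix ρ) :
    IsSelfAdjoint ρ :=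
  hρ.1.isHermitian

lemma IsDensityMatrix.traceNorm_eq_one {ρ : Matrix n n ℂ} (hρ : IsDensityMatrix ρ) :
    traceNorm ρ = 1 := by
  rw [hρ.1.traceNorm_eq, hρ.2, Complex.one_re]

lemma exists_isDensityMatrix [Nonempty n] : ∃ ρ : Matrix n n ℂ, IsDensityMatrix ρ := by
  let i : n := Classical.arbitrary n
  refine ⟨diagonal (Pi.single i 1), posSemidef_diagonal_iff.mpr fun j => ?_, ?_⟩
  · by_cases h : j = i
    · subst h; simp
    · simp [h]
  · rw [trace_diagonal, Finset.sum_pi_single' i 1, if_pos (Finset.mem_univ i)]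

lemma isDensityMatrix_inv_smul {A : Matrix n n ℂ} (hA : 0 ≤ A) {t : ℝ} (ht : 0 < t)
    (htr : A.trace = t) : IsDensityMatrix (t⁻¹ • A) := by
  refine ⟨(smul_nonneg (inv_nonneg.mpr ht.le) hA).posSemidef, ?_⟩
  rw [trace_smul, htr, Complex.real_smul, ← Complex.ofReal_mul, inv_mul_cancel₀ ht.ne',
    Complex.ofReal_one]

/-- Jordan decomposition: `ρ - ρ' = t (σ - σ')` with `t σ = (ρ - ρ')⁺` and `t σ' = (ρ - ρ')⁻`;
both parts have trace `t` because `ρ - ρ'` is traceless. -/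
lemma IsDensityMatrix.exists_sub_eq_smul_sub {ρ ρ' : Matrix n n ℂ} (hρ : IsDensityMatrix ρ)
    (hρ' : IsDensityMatrix ρ') (hne : ρ ≠ ρ') :
    ∃ t : ℝ, 0 < t ∧ ∃ σ σ' : Matrix n n ℂ, IsDensityMatrix σ ∧ IsDensityMatrix σ' ∧
      traceNorm (σ - σ') = 2 ∧ ρ - ρ' = t • (σ - σ') := by
  set X := ρ - ρ'
  have hX : IsSelfAdjoint X := hρ.isSelfAdjoint.sub hρ'.isSelfAdjoint
  have hP := CFC.posPart_nonneg X
  have hQ := CFC.negPart_nonneg X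
  set t := (X⁺).trace.re
  have htP : X⁺.trace = t :=
    Complex.ext rfl (Complex.nonneg_iff.mp hP.posSemidef.trace_nonneg).2.symm
  have htQ : X⁻.trace = t := by
    have hX0 : X⁺.trace - X⁻.trace = 0 := by
      rw [← trace_sub, CFC.posPart_sub_negPart X hX, trace_sub, hρ.2, hρ'.2, sub_self]
    rw [← htP, ← sub_eq_zero.mp hX0]
  have ht : 0 < t := by
    refine (Complex.nonneg_iff.mp hP.posSemidef.trace_nonneg).1.lt_of_ne fun h0 => hne ?_
    have hP0 : X⁺ = 0 := hP.posSemidef.trace_eq_zero_iff.mp (by rw [htP]; exact_mod_cast h0.symm)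
    have hQ0 : X⁻ = 0 := hQ.posSemidef.trace_eq_zero_iff.mp (by rw [htQ]; exact_mod_cast h0.symm)
    rw [← sub_eq_zero]
    change X = 0
    rw [← CFC.posPart_sub_negPart X hX, hP0, hQ0, sub_zero]
  have hσσ' : t⁻¹ • X⁺ - t⁻¹ • X⁻ = t⁻¹ • X := by rw [← smul_sub, CFC.posPart_sub_negPart X hX]
  refine ⟨t, ht, t⁻¹ • X⁺, t⁻¹ • X⁻, isDensityMatrix_inv_smul hP ht htP,
    isDensityMatrix_inv_smul hQ ht htQ, ?_, ?_⟩
  · rw [hσσ', traceNorm_smul, hX.traceNorm_eq, htP, htQ, abs_of_pos (inv_pos.mpr ht)]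
    simp only [← Complex.ofReal_add, Complex.ofReal_re]
    field_simp
    ring
  · rw [hσσ', smul_inv_smul₀ ht.ne']

end DensityMatrix

lemma traceNorm_map_sub_div_eq_of_sub_eq_smul_sub {n m : Type*} [Fintype n] [DecidableEq n]
    [Fintype m] [DecidableEq m] (N : Matrix n n ℂ →ₗ[ℂ] Matrix m m ℂ)
    {ρ ρ' σ σ' : Matrix n n ℂ} {t : ℝ} (ht : t ≠ 0) (hd : ρ - ρ' = t • (σ - σ')) :
    traceNorm (N ρ - N ρ') / traceNorm (ρ - ρ') = traceNorm (N σ - N σ') / traceNorm (σ - σ') := by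
  rw [← map_sub, ← map_sub, hd, LinearMap.map_smul_of_tower, traceNorm_smul, traceNorm_smul,
    mul_div_mul_left _ _ (abs_pos.mpr ht).ne']

section Channel

variable {dA dB : ℕ} {N N' : Matrix (Fin dA) (Fin dA) ℂ →ₗ[ℂ] Matrix (Fin dB) (Fin dB) ℂ}

lemma IsQuantumChannel.isDensityMatrix_apply (hN : IsQuantumChannel N)
    {ρ : Matrix (Fin dA) (Fin dA) ℂ} (hρ : IsDensityMatrix ρ) : IsDensityMatrix (N ρ) := by
  obtain ⟨k, K, hK, hsum⟩ := hN
  refine ⟨?_, ?_⟩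
  · rw [hK]
    exact posSemidef_sum _ fun i _ => hρ.1.mul_mul_conjTranspose_same (K i)
  · rw [hK, trace_sum]
    simp_rw [trace_mul_cycle _ ρ]
    rw [← trace_sum, ← Finset.sum_mul, hsum, Matrix.one_mul, hρ.2]

lemma IsQuantumChannel.traceNorm_div_le_one (hN : IsQuantumChannel N)
    {ρ ρ' : Matrix (Fin dA) (Fin dA) ℂ} (hρ : IsDensityMatrix ρ) (hρ' : IsDensityMatrix ρ')
    (hne : ρ ≠ ρ') : traceNorm (N ρ - N ρ') / traceNorm (ρ - ρ') ≤ 1 := by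
  obtain ⟨t, ht, σ, σ', hσ, hσ', h2, hd⟩ := hρ.exists_sub_eq_smul_sub hρ' hne
  rw [traceNorm_map_sub_div_eq_of_sub_eq_smul_sub N ht.ne' hd, h2, div_le_one two_pos]
  have hNσ := hN.isDensityMatrix_apply hσ
  have hNσ' := hN.isDensityMatrix_apply hσ'
  simpa [hNσ.traceNorm_eq_one, hNσ'.traceNorm_eq_one, traceNorm_neg, one_add_one_eq_two] using
    traceNorm_sub_le hNσ.isSelfAdjoint (.zero _) hNσ'.isSelfAdjoint

lemma IsQuantumChannel.le_CEmax (hN : IsQuantumChannel N) {ρ ρ' : Matrix (Fin dA) (Fin dA) ℂ}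
    (hρ : IsDensityMatrix ρ) (hρ' : IsDensityMatrix ρ') (hne : ρ ≠ ρ') :
    traceNorm (N ρ - N ρ') / traceNorm (ρ - ρ') ≤ CEmax N := by
  refine le_csSup ⟨1, ?_⟩ ⟨ρ, ρ', hρ, hρ', hne, rfl⟩
  rintro _ ⟨ρ, ρ', hρ, hρ', hne, rfl⟩
  exact hN.traceNorm_div_le_one hρ hρ' hne

lemma CEmax_nonneg (N : Matrix (Fin dA) (Fin dA) ℂ →ₗ[ℂ] Matrix (Fin dB) (Fin dB) ℂ) :
    0 ≤ CEmax N := by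
  refine Real.sSup_nonneg fun _ ⟨ρ, ρ', _, _, _, hx⟩ => ?_
  rw [hx]
  exact div_nonneg (traceNorm_nonneg _) (traceNorm_nonneg _)

lemma CEmax_le_CEmax_add (hN : IsQuantumChannel N) (hN' : IsQuantumChannel N') {ε : ℝ}
    (hε : 0 ≤ ε) (hclose : ∀ ρ, IsDensityMatrix ρ → traceNorm (N ρ - N' ρ) ≤ ε) :
    CEmax N ≤ CEmax N' + ε := by
  refine Real.sSup_le ?_ (add_nonneg (CEmax_nonneg N') hε)
  rintro _ ⟨ρ, ρ', hρ, hρ', hne, rfl⟩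
  obtain ⟨t, ht, σ, σ', hσ, hσ', h2, hd⟩ := hρ.exists_sub_eq_smul_sub hρ' hne
  have hσσ' : σ ≠ σ' := by
    rintro rfl
    simp [traceNorm_eq_re_trace_abs] at h2
  have hNN' : traceNorm (N σ - N σ') ≤ traceNorm (N' σ - N' σ') + 2 * ε := by
    have h₁ := traceNorm_sub_le (hN.isDensityMatrix_apply hσ).isSelfAdjoint
      (hN'.isDensityMatrix_apply hσ).isSelfAdjoint (hN.isDensityMatrix_apply hσ').isSelfAdjoint
    have h₂ := traceNorm_sub_le (hN'.isDensityMatrix_apply hσ).isSelfAdjoint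
      (hN'.isDensityMatrix_apply hσ').isSelfAdjoint (hN.isDensityMatrix_apply hσ').isSelfAdjoint
    rw [traceNorm_sub_comm (N' σ')] at h₂
    linarith [hclose σ hσ, hclose σ' hσ']
  calc traceNorm (N ρ - N ρ') / traceNorm (ρ - ρ')
      = traceNorm (N σ - N σ') / 2 := by
        rw [traceNorm_map_sub_div_eq_of_sub_eq_smul_sub N ht.ne' hd, h2]
    _ ≤ traceNorm (N' σ - N' σ') / traceNorm (σ - σ') + ε := by
        rw [h2]; linarith
    _ ≤ CEmax N' + ε := by
        gcongr
        exact hN'.le_CEmax hσ hσ' hσσ'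

end Channel

/-- **Continuity of the maximum causal effect.**
If two quantum channels `N, N' : A → B` (`dA ≥ 2`) satisfy `‖N ρ − N' ρ‖₁ ≤ ε` for every
density matrix `ρ`, then `|CEmax N − CEmax N'| ≤ ε`. -/
theorem CEmax_continuity {dA dB : ℕ} (hdA : 2 ≤ dA) (ε : ℝ)
    (N N' : Matrix (Fin dA) (Fin dA) ℂ →ₗ[ℂ] Matrix (Fin dB) (Fin dB) ℂ)
    (hN : IsQuantumChannel N) (hN' : IsQuantumChannel N')
    (hclose : ∀ ρ : Matrix (Fin dA) (Fin dA) ℂ, IsDensityMatrix ρ →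
      traceNorm (N ρ - N' ρ) ≤ ε) :
    |CEmax N - CEmax N'| ≤ ε := by
  have : Nonempty (Fin dA) := ⟨⟨0, by omega⟩⟩
  obtain ⟨ρ₀, hρ₀⟩ := exists_isDensityMatrix (n := Fin dA)
  have hε : 0 ≤ ε := (traceNorm_nonneg _).trans (hclose ρ₀ hρ₀)
  rw [abs_sub_le_iff, sub_le_iff_le_add', sub_le_iff_le_add']
  exact ⟨CEmax_le_CEmax_add hN hN' hε hclose,
    CEmax_le_CEmax_add hN' hN hε fun ρ hρ => traceNorm_sub_comm (N ρ) (N' ρ) ▸ hclose ρ hρ⟩
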